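/- Let τ ≥ 1, ρ ≥ 1, λ ∈ ℂ, and consider the 4τρ × 4τρ matrices over S = ℂ[[x,y,z]]: φ_deg = [[−zx·I, 0, 0, 0],[z·I, −y·I, 0, 0],[0, x·I, −z·I, 0],[−x·R, 0, y·I, −xy·I]] and ψ_deg = [[−y·I, 0, 0, 0],[−z·I, −zx·I, 0, 0],[−x·I, −x²·I, −xy·I, 0],[−I + R, −x·I, −y·I, −z·I]], where I = I_{τρ} and R = R_{τ,ρ}(λ) := R_τ(J_ρ(λ)) is the matrix J_τ ⊗ I_ρ + K_τ^{τ−1} ⊗ J_ρ(λ). Then (φ_deg, ψ_deg) is a matrix factorization of xyz: φ_deg ψ_deg = ψ_deg φ_deg = xyz · I_{4τρ}. -/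

import Mathlib

noncomputable section

open Matrix Kronecker

/-- `S = ℂ[[x,y,z]]`. -/
abbrev S3 : Type := MvPowerSeries (Fin 3) ℂ

def xx : S3 := MvPowerSeries.X 0
def yy : S3 := MvPowerSeries.X 1
def zz : S3 := MvPowerSeries.X 2

/-- The `τ × τ` nilpotent Jordan block `J_τ` (1's on the superdiagonal). -/
def nilJ (τ : ℕ) : Matrix (Fin τ) (Fin τ) ℂ :=
  Matrix.of fun i j => if (i : ℕ) + 1 = (j : ℕ) then 1 else 0

/-- The `ρ × ρ` Jordan block with eigenvalue `λ`. -/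
def jordanBlock (ρ : ℕ) (lam : ℂ) : Matrix (Fin ρ) (Fin ρ) ℂ :=
  Matrix.of fun i j => if i = j then lam else if (i : ℕ) + 1 = (j : ℕ) then 1 else 0

/-- `R_{τ,ρ}(λ) = J_τ ⊗ I_ρ + K_τ^{τ-1} ⊗ J_ρ(λ)`, as a matrix over `S`. -/
def RtrS (τ ρ : ℕ) (lam : ℂ) : Matrix (Fin τ × Fin ρ) (Fin τ × Fin ρ) S3 :=
  (nilJ τ ⊗ₖ (1 : Matrix (Fin ρ) (Fin ρ) ℂ) +
    ((nilJ τ)ᵀ ^ (τ - 1)) ⊗ₖ jordanBlock ρ lam).map (algebraMap ℂ S3)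

/-- The 4×4 block structure of `φ_deg`. -/
def phiBlk (τ ρ : ℕ) (lam : ℂ) :
    Fin 4 → Fin 4 → Matrix (Fin τ × Fin ρ) (Fin τ × Fin ρ) S3 :=
  ![![(-(zz * xx)) • 1, 0, 0, 0],
    ![zz • 1, (-yy) • 1, 0, 0],
    ![0, xx • 1, (-zz) • 1, 0],
    ![(-xx) • RtrS τ ρ lam, 0, yy • 1, (-(xx * yy)) • 1]]

/-- The 4×4 block structure of `ψ_deg`. -/
def psiBlk (τ ρ : ℕ) (lam : ℂ) :
    Fin 4 → Fin 4 → Matrix (Fin τ × Fin ρ) (Fin τ × Fin ρ) S3 :=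
  ![![(-yy) • 1, 0, 0, 0],
    ![(-zz) • 1, (-(zz * xx)) • 1, 0, 0],
    ![(-xx) • 1, (-(xx * xx)) • 1, (-(xx * yy)) • 1, 0],
    ![RtrS τ ρ lam - 1, (-xx) • 1, (-yy) • 1, (-zz) • 1]]

/-- The `4τρ × 4τρ` matrix `φ_deg`. -/
def phiDeg (τ ρ : ℕ) (lam : ℂ) :
    Matrix (Fin 4 × (Fin τ × Fin ρ)) (Fin 4 × (Fin τ × Fin ρ)) S3 :=
  Matrix.of fun p q => phiBlk τ ρ lam p.1 q.1 p.2 q.2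

/-- The `4τρ × 4τρ` matrix `ψ_deg`. -/
def psiDeg (τ ρ : ℕ) (lam : ℂ) :
    Matrix (Fin 4 × (Fin τ × Fin ρ)) (Fin 4 × (Fin τ × Fin ρ)) S3 :=
  Matrix.of fun p q => psiBlk τ ρ lam p.1 q.1 p.2 q.2

/-!
Read `φ_deg` and `ψ_deg` as 4×4 matrices over the ring of `τρ × τρ` matrices. Their entries are
central scalars `x, y, z` times `1`, except for the single block `R`, and in both products the two
terms containing `R` cancel. So the identity holds with `R` replaced by an arbitrary element `r` of
any algebra.
-/

section GenericBlocks

variable {K A : Type*} [CommRing K] [Ring A] [Algebra K A] (x y z : K) (r : A)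

def phiBlock : Matrix (Fin 4) (Fin 4) A :=
  !![(-(z * x)) • 1, 0, 0, 0;
    z • 1, (-y) • 1, 0, 0;
    0, x • 1, (-z) • 1, 0;
    (-x) • r, 0, y • 1, (-(x * y)) • 1]

def psiBlock : Matrix (Fin 4) (Fin 4) A :=
  !![(-y) • 1, 0, 0, 0;
    (-z) • 1, (-(z * x)) • 1, 0, 0;
    (-x) • 1, (-(x * x)) • 1, (-(x * y)) • 1, 0;
    r - 1, (-x) • 1, (-y) • 1, (-z) • 1]

theorem phiBlock_mul_psiBlock : phiBlock x y z r * psiBlock x y z r = (x * y * z) • 1 := by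
  ext i j
  fin_cases i <;> fin_cases j <;>
    simp [phiBlock, psiBlock, Matrix.mul_apply, Fin.sum_univ_four] <;> module

theorem psiBlock_mul_phiBlock : psiBlock x y z r * phiBlock x y z r = (x * y * z) • 1 := by
  ext i j
  fin_cases i <;> fin_cases j <;>
    simp [phiBlock, psiBlock, Matrix.mul_apply, Fin.sum_univ_four] <;> module

end GenericBlocks

theorem Matrix.comp_mul_comp_of_mul_eq_smul_one {K R I J : Type*} [CommSemiring K] [Semiring R]
    [Algebra K R] [Fintype I] [Fintype J] [DecidableEq I] [DecidableEq J]
    {M N : Matrix I I (Matrix J J R)} {c : K} (h : M * N = c • 1) :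
    comp I I J J R M * comp I I J J R N = c • 1 := by
  simpa only [map_mul, map_smul, map_one, compAlgEquiv_apply] using congrArg (compAlgEquiv I J R K) h

theorem phiDeg_eq_comp (τ ρ : ℕ) (lam : ℂ) :
    phiDeg τ ρ lam = comp _ _ _ _ _ (phiBlock xx yy zz (RtrS τ ρ lam)) := rfl

theorem psiDeg_eq_comp (τ ρ : ℕ) (lam : ℂ) :
    psiDeg τ ρ lam = comp _ _ _ _ _ (psiBlock xx yy zz (RtrS τ ρ lam)) := rfl

theorem phiDeg_psiDeg_matrix_factorization_general (τ ρ : ℕ) (lam : ℂ) :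
    phiDeg τ ρ lam * psiDeg τ ρ lam = (xx * yy * zz) • 1 ∧
    psiDeg τ ρ lam * phiDeg τ ρ lam = (xx * yy * zz) • 1 := by
  rw [phiDeg_eq_comp, psiDeg_eq_comp]
  exact ⟨comp_mul_comp_of_mul_eq_smul_one (phiBlock_mul_psiBlock _ _ _ _),
    comp_mul_comp_of_mul_eq_smul_one (psiBlock_mul_phiBlock _ _ _ _)⟩

/-- `(φ_deg, ψ_deg)` is a matrix factorization of `xyz`. -/
theorem phiDeg_psiDeg_matrix_factorization (τ ρ : ℕ) (hτ : 1 ≤ τ) (hρ : 1 ≤ ρ) (lam : ℂ) :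
    phiDeg τ ρ lam * psiDeg τ ρ lam = (xx * yy * zz) • 1 ∧
    psiDeg τ ρ lam * phiDeg τ ρ lam = (xx * yy * zz) • 1 :=
  phiDeg_psiDeg_matrix_factorization_general τ ρ lam
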